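/- arXiv:2508.06164 — 3 statements merged into one kernel-verified Lean document; each statement's English description precedes it below -/
import Mathlib

section
/- Let T ∈ (0,∞], let y : [0,T) → ℝ be continuous on [0,T), differentiable on (0,T), with y(t) > 0 for all t ∈ [0,T), and let a > 0, b > 0, q > 1 and K > 1. Assume y'(t) ≥ a·y(t)^q − b for all t ∈ (0,T) and y(0) > (K b / a)^{1/q}. Then y(t) > (K b / a)^{1/q} for every t ∈ [0,T), and consequently y'(t) ≥ ((K−1)/K)·a·y(t)^q for every t ∈ (0,T). -/
open Real ENNReal

/-- If `y' ≥ a y^q - b` on `(0,T)` and `y(0) > (Kb/a)^{1/q}`, then `y` stays above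
`(Kb/a)^{1/q}` on `[0,T)` and satisfies `y' ≥ ((K-1)/K) a y^q` on `(0,T)`. -/
theorem ode_lower_bound_persists
    (T : ℝ≥0∞) (hT : 0 < T) (y : ℝ → ℝ) (a b q K : ℝ)
    (ha : 0 < a) (hb : 0 < b) (hq : 1 < q) (hK : 1 < K)
    (hcont : ContinuousOn y {t : ℝ | 0 ≤ t ∧ ENNReal.ofReal t < T})
    (hdiff : ∀ t : ℝ, 0 < t → ENNReal.ofReal t < T → DifferentiableAt ℝ y t)
    (hpos : ∀ t : ℝ, 0 ≤ t → ENNReal.ofReal t < T → 0 < y t)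
    (hineq : ∀ t : ℝ, 0 < t → ENNReal.ofReal t < T → a * y t ^ q - b ≤ deriv y t)
    (hy0 : (K * b / a) ^ (1 / q) < y 0) :
    (∀ t : ℝ, 0 ≤ t → ENNReal.ofReal t < T → (K * b / a) ^ (1 / q) < y t) ∧
    (∀ t : ℝ, 0 < t → ENNReal.ofReal t < T → (K - 1) / K * a * y t ^ q ≤ deriv y t) := by
  set M := (K * b / a) ^ (1 / q) with hM
  have hKba : 0 < K * b / a := by positivity
  have hMpos : 0 < M := Real.rpow_pos_of_pos hKba _
  have hMq : M ^ q = K * b / a := by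
    rw [hM, one_div, Real.rpow_inv_rpow hKba.le (by positivity : q ≠ 0)]
  have key : ∀ t : ℝ, 0 ≤ t → ENNReal.ofReal t < T → M < y t := by
    intro t0 ht0 ht0T
    by_contra hle
    push_neg at hle
    have hsub : Set.Icc (0:ℝ) t0 ⊆ {t : ℝ | 0 ≤ t ∧ ENNReal.ofReal t < T} := by
      intro t ht
      exact ⟨ht.1, lt_of_le_of_lt (ENNReal.ofReal_le_ofReal ht.2) ht0T⟩
    have hcont' : ContinuousOn y (Set.Icc 0 t0) := hcont.mono hsub
    set A : Set ℝ := Set.Icc (0:ℝ) t0 ∩ y ⁻¹' Set.Iic M with hA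
    have hAne : A.Nonempty := ⟨t0, ⟨⟨ht0, le_refl t0⟩, hle⟩⟩
    have hAbdd : BddBelow A := ⟨0, fun x hx => hx.1.1⟩
    have hAclosed : IsClosed A :=
      hcont'.preimage_isClosed_of_isClosed isClosed_Icc isClosed_Iic
    set s := sInf A with hs
    have hsA : s ∈ A := hAclosed.csInf_mem hAne hAbdd
    have hys : y s ≤ M := hsA.2
    have hs0 : 0 < s := by
      rcases lt_or_eq_of_le hsA.1.1 with h | h
      · exact h
      · exfalso; rw [← h] at hys; linarith
    have habove : ∀ t, t ∈ Set.Ico (0:ℝ) s → M < y t := by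
      intro t ht
      by_contra hle'
      push_neg at hle'
      have htA : t ∈ A := ⟨⟨ht.1, ht.2.le.trans hsA.1.2⟩, hle'⟩
      exact absurd (csInf_le hAbdd htA) (not_le.mpr ht.2)
    have hcont'' : ContinuousOn y (Set.Icc 0 s) :=
      hcont'.mono (Set.Icc_subset_Icc le_rfl hsA.1.2)
    have hmono : StrictMonoOn y (Set.Icc 0 s) := by
      apply strictMonoOn_of_deriv_pos (convex_Icc 0 s) hcont''
      intro t ht
      rw [interior_Icc] at ht
      have htT : ENNReal.ofReal t < T :=
        lt_of_le_of_lt (ENNReal.ofReal_le_ofReal (ht.2.le.trans hsA.1.2)) ht0T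
      have hyt : M < y t := habove t ⟨ht.1.le, ht.2⟩
      have hpow : M ^ q < y t ^ q := Real.rpow_lt_rpow hMpos.le hyt (by linarith)
      rw [hMq] at hpow
      have h1 : K * b < a * y t ^ q := by
        have := mul_lt_mul_of_pos_left hpow ha
        rwa [mul_div_cancel₀ _ (ne_of_gt ha)] at this
      have := hineq t ht.1 htT
      nlinarith
    have : y 0 < y s := hmono ⟨le_rfl, hs0.le⟩ ⟨hs0.le, le_rfl⟩ hs0
    linarith
  refine ⟨key, fun t ht htT => ?_⟩
  have hyt : M < y t := key t ht.le htT
  have hpow : M ^ q < y t ^ q := Real.rpow_lt_rpow hMpos.le hyt (by linarith)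
  rw [hMq] at hpow
  have h1 : K * b < a * y t ^ q := by
    have := mul_lt_mul_of_pos_left hpow ha
    rwa [mul_div_cancel₀ _ (ne_of_gt ha)] at this
  have h2 := hineq t ht htT
  have hK0 : (0:ℝ) < K := by linarith
  rw [div_mul_eq_mul_div, div_mul_eq_mul_div, div_le_iff₀ hK0]
  nlinarith
end

section
/- Let T ∈ (0,∞), let y : [0,T) → ℝ be continuous on [0,T), differentiable on (0,T), with y(t) > 0 for all t ∈ [0,T), and let a > 0, b > 0, q > 1 and K > 1. Assume y'(t) ≥ a·y(t)^q − b for all t ∈ (0,T) and y(0) > (K b / a)^{1/q}. Then T ≤ K · y(0)^{1−q} / (a (K−1)(q−1)). -/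
/-!
At the threshold `M = (K b / a) ^ (1 / q)` the inequality gives `y' ≥ a M ^ q - b = (K - 1) b > 0`,
so `y` never falls to `M`. Above `M` we have `b < a y ^ q / K`, hence `y' ≥ c y ^ q` with
`c = a (K - 1) / K`. Then `y ^ (1 - q) + c (q - 1) t` is nonincreasing while `y ^ (1 - q) > 0`,
so every `t < T` satisfies `c (q - 1) t < y 0 ^ (1 - q)`.
-/

open Real Set

/- Barrier argument: at the first time `s` with `f s ≤ M`, the function is above `M` on `(a, s)`,
hence strictly increasing on `[a, s]`, so `f s > f a > M`. -/
theorem ContinuousOn.forall_lt_of_deriv_pos {f : ℝ → ℝ} {a T M : ℝ}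
    (hf : ContinuousOn f (Ico a T)) (ha : M < f a)
    (hderiv : ∀ t ∈ Ioo a T, M < f t → 0 < deriv f t) :
    ∀ t ∈ Ico a T, M < f t := by
  intro t ht
  by_contra! hft
  have hcompact : IsCompact (Icc a t ∩ f ⁻¹' Iic M) :=
    isCompact_Icc.of_isClosed_subset
      ((hf.mono (Icc_subset_Ico_right ht.2)).preimage_isClosed_of_isClosed isClosed_Icc
        isClosed_Iic) inter_subset_left
  obtain ⟨s, ⟨⟨has, hst⟩, hfs⟩, hleast⟩ :=
    hcompact.exists_isLeast ⟨t, ⟨right_mem_Icc.2 ht.1, hft⟩⟩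
  have has' : a < s := lt_of_le_of_ne has fun h => by subst h; exact (not_le.2 ha) hfs
  have hmono : StrictMonoOn f (Icc a s) := by
    refine strictMonoOn_of_deriv_pos (convex_Icc a s)
      (hf.mono (Icc_subset_Ico_right (hst.trans_lt ht.2))) fun x hx => ?_
    rw [interior_Icc] at hx
    refine hderiv x ⟨hx.1, (hx.2.trans_le hst).trans ht.2⟩ ?_
    by_contra! hfx
    exact not_le.2 hx.2 (hleast ⟨⟨hx.1.le, hx.2.le.trans hst⟩, hfx⟩)
  have := hmono (left_mem_Icc.2 has) (right_mem_Icc.2 has) has'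
  exact absurd hfs (not_le.2 (ha.trans this))

/- `(f ^ (1 - q))' = (1 - q) f' / f ^ q ≤ -(q - 1) c`. -/
theorem antitoneOn_rpow_one_sub_add_mul_of_mul_rpow_le_deriv {f : ℝ → ℝ} {a T c q : ℝ}
    (hq : 1 ≤ q) (hf : ContinuousOn f (Ico a T)) (hpos : ∀ t ∈ Ico a T, 0 < f t)
    (hdiff : ∀ t ∈ Ioo a T, DifferentiableAt ℝ f t)
    (hderiv : ∀ t ∈ Ioo a T, c * f t ^ q ≤ deriv f t) :
    AntitoneOn (fun t => f t ^ (1 - q) + c * (q - 1) * t) (Ico a T) := by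
  have hasDeriv : ∀ t ∈ Ioo a T, HasDerivAt (fun t => f t ^ (1 - q) + c * (q - 1) * t)
      (deriv f t * (1 - q) * (f t ^ q)⁻¹ + c * (q - 1)) t := by
    intro t ht
    have hft := hpos t (Ioo_subset_Ico_self ht)
    refine (((hdiff t ht).hasDerivAt.rpow_const (Or.inl hft.ne')).add
      ((hasDerivAt_id t).const_mul (c * (q - 1)))).congr_deriv ?_
    rw [sub_sub_cancel_left, rpow_neg hft.le, mul_one]
  refine antitoneOn_of_deriv_nonpos (convex_Ico a T)
    (hf.rpow_const (fun t ht => Or.inl (hpos t ht).ne') |>.add (by fun_prop))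
    (fun t ht => ?_) fun t ht => ?_ <;> rw [interior_Ico] at ht
  · exact (hasDeriv t ht).differentiableAt.differentiableWithinAt
  · have hfq : 0 < f t ^ q := rpow_pos_of_pos (hpos t (Ioo_subset_Ico_self ht)) q
    have hc : c ≤ deriv f t * (f t ^ q)⁻¹ := by
      rw [← div_eq_mul_inv, le_div_iff₀ hfq]; exact hderiv t ht
    rw [(hasDeriv t ht).deriv]
    nlinarith

theorem sub_le_rpow_one_sub_div_of_mul_rpow_le_deriv {f : ℝ → ℝ} {a T c q : ℝ}
    (hc : 0 < c) (hq : 1 < q) (haT : a < T) (hf : ContinuousOn f (Ico a T))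
    (hpos : ∀ t ∈ Ico a T, 0 < f t) (hdiff : ∀ t ∈ Ioo a T, DifferentiableAt ℝ f t)
    (hderiv : ∀ t ∈ Ioo a T, c * f t ^ q ≤ deriv f t) :
    T - a ≤ f a ^ (1 - q) / (c * (q - 1)) := by
  have hcq : 0 < c * (q - 1) := mul_pos hc (by linarith)
  set τ := f a ^ (1 - q) / (c * (q - 1))
  by_contra! hτ
  have hfa : 0 < f a := hpos a (left_mem_Ico.2 haT)
  have hτ0 : 0 ≤ τ := div_nonneg (rpow_nonneg hfa.le _) hcq.le
  have hmem : a + τ ∈ Ico a T := ⟨by linarith, by linarith⟩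
  have hanti := antitoneOn_rpow_one_sub_add_mul_of_mul_rpow_le_deriv hq.le hf hpos hdiff hderiv
    (left_mem_Ico.2 haT) hmem (by linarith)
  have hτeq : c * (q - 1) * τ = f a ^ (1 - q) := mul_div_cancel₀ _ hcq.ne'
  have := rpow_pos_of_pos (hpos _ hmem) (1 - q)
  simp only [mul_add] at hanti
  linarith

/-- A positive function satisfying `y' ≥ a y^q - b` with `q > 1` on `(0,T)` and
starting above the threshold `(Kb/a)^{1/q}` forces `T ≤ K y(0)^{1-q} / (a (K-1)(q-1))`. -/
theorem ode_blowup_time_bound_with_threshold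
    (T : ℝ) (hT : 0 < T) (y : ℝ → ℝ) (a b q K : ℝ)
    (ha : 0 < a) (hb : 0 < b) (hq : 1 < q) (hK : 1 < K)
    (hcont : ContinuousOn y (Set.Ico 0 T))
    (hdiff : ∀ t ∈ Set.Ioo (0 : ℝ) T, DifferentiableAt ℝ y t)
    (hpos : ∀ t ∈ Set.Ico (0 : ℝ) T, 0 < y t)
    (hineq : ∀ t ∈ Set.Ioo (0 : ℝ) T, a * y t ^ q - b ≤ deriv y t)
    (hy0 : (K * b / a) ^ (1 / q) < y 0) :
    T ≤ K * y 0 ^ (1 - q) / (a * (K - 1) * (q - 1)) := by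
  have hKb : 0 < K * b / a := div_pos (mul_pos (by linarith) hb) ha
  have hMq : ((K * b / a) ^ (1 / q)) ^ q = K * b / a := by
    rw [← rpow_mul hKb.le, one_div_mul_cancel (by linarith), rpow_one]
  have hthreshold : ∀ t ∈ Ioo 0 T, (K * b / a) ^ (1 / q) < y t → K * b < a * y t ^ q := by
    intro t _ hyt
    have := rpow_lt_rpow (rpow_nonneg hKb.le _) hyt (by linarith : 0 < q)
    rw [hMq, div_lt_iff₀ ha] at this
    linarith
  have habove := hcont.forall_lt_of_deriv_pos hy0 fun t ht hyt => by
    nlinarith [hthreshold t ht hyt, hineq t ht]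
  have hderiv : ∀ t ∈ Ioo 0 T, a * (K - 1) / K * y t ^ q ≤ deriv y t := by
    intro t ht
    have := hthreshold t ht (habove t (Ioo_subset_Ico_self ht))
    rw [div_mul_eq_mul_div, div_le_iff₀ (by linarith)]
    nlinarith [hineq t ht]
  have := sub_le_rpow_one_sub_div_of_mul_rpow_le_deriv (div_pos (by nlinarith) (by linarith))
    hq hT hcont hpos hdiff hderiv
  rw [sub_zero] at this
  convert this using 1
  field_simp
end

section
/- Let N ≥ 1, m > 0, θ ∈ (0, min{1, m}) and s ≥ 2. Let u : ℝ^N → (0,∞) be twice continuously differentiable and let ζ : ℝ^N → [0,∞) be continuously differentiable with compact support. Then ∫_{ℝ^N} ζ(x)^s |x|^s u(x)^{−θ} Δ(u^m)(x) dx ≥ −(m s² / 2θ) [ ∫_{ℝ^N} ζ(x)^{s−2} |x|^s u(x)^{m−θ} |∇ζ(x)|² dx + ∫_{ℝ^N} ζ(x)^s |x|^{s−2} u(x)^{m−θ} dx ]. -/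
open MeasureTheory Real RealInnerProductSpace

/-!
Integrating by parts, `∫ W Δ(u^m) = -∫ ∇W · ∇(u^m)` for the compactly supported weight
`W = ζ^s |x|^s u^{-θ}`. Differentiating `u^{-θ}` produces the good term
`θ m ζ^s |x|^s u^{m-θ-2} |∇u|²`, while differentiating `ζ^s |x|^s` produces the two cross terms
`m s u^{m-θ-1} (ζ^{s-1} |x|^s ∇ζ·∇u + ζ^s |x|^{s-2} x·∇u)`. Young's inequality with parameter `θ`
absorbs each cross term into half of the good term, at the cost of
`(m s²/2θ) ζ^{s-2} |x|^s u^{m-θ} |∇ζ|²` and `(m s²/2θ) ζ^s |x|^{s-2} u^{m-θ}` respectively.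
-/

/-- The Laplacian of a real-valued function on `ℝ^N`, as the sum of the second
partial derivatives in the coordinate directions. -/
noncomputable def laplacian {N : ℕ} (f : EuclideanSpace ℝ (Fin N) → ℝ)
    (x : EuclideanSpace ℝ (Fin N)) : ℝ :=
  ∑ i : Fin N, fderiv ℝ (fun y => fderiv ℝ f y (EuclideanSpace.single i 1)) x
    (EuclideanSpace.single i 1)

theorem young_bound_polynomial {θ s z r v g G a b : ℝ} (hθ : 0 < θ) (hs : 0 ≤ s) (hz : 0 ≤ z)
    (hv : 0 ≤ v) (ha : a ≤ g * G) (hb : b ≤ r * G) :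
    s * v * (z * r ^ 2 * a + z ^ 2 * b) ≤
      θ * z ^ 2 * r ^ 2 * G ^ 2 + s ^ 2 / (2 * θ) * v ^ 2 * (r ^ 2 * g ^ 2 + z ^ 2) := by
  have hsvz : 0 ≤ s * v * z := by positivity
  have h1 : s * v * z * r ^ 2 * a ≤ s * v * z * r ^ 2 * (g * G) := by gcongr
  have h2 : s * v * z ^ 2 * b ≤ s * v * z ^ 2 * (r * G) := by gcongr
  have hsquares : θ * z ^ 2 * r ^ 2 * G ^ 2 + s ^ 2 / (2 * θ) * v ^ 2 * (r ^ 2 * g ^ 2 + z ^ 2)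
      - s * v * (z * r ^ 2 * (g * G) + z ^ 2 * (r * G))
      = (r ^ 2 * (θ * z * G - s * v * g) ^ 2 + z ^ 2 * (θ * r * G - s * v) ^ 2) / (2 * θ) := by
    field_simp; ring
  have hsq :
      0 ≤ (r ^ 2 * (θ * z * G - s * v * g) ^ 2 + z ^ 2 * (θ * r * G - s * v) ^ 2) / (2 * θ) := by
    positivity
  linarith

/-- The pointwise estimate, with `z, r, v, g, G, a, b` standing for
`ζ, |x|, u, |∇ζ|, |∇u|, ∇ζ·∇u, x·∇u`. Both sides carry the factor `z^{s-2} r^{s-2} v^{m-θ-2}`;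
removing it leaves `young_bound_polynomial`. -/
theorem young_bound_rpow {m θ s z r v g G a b : ℝ} (hm : 0 < m) (hθ : 0 < θ) (hs : 2 ≤ s)
    (hz : 0 ≤ z) (hr : 0 ≤ r) (hv : 0 < v) (ha : a ≤ g * G) (hb : b ≤ r * G) :
    -(m * s ^ 2 / (2 * θ)) * (z ^ (s - 2) * r ^ s * v ^ (m - θ) * g ^ 2
        + z ^ s * r ^ (s - 2) * v ^ (m - θ)) ≤
      -(m * v ^ (m - 1) * (v ^ (-θ) * (s * z ^ (s - 1) * r ^ s * a + s * z ^ s * r ^ (s - 2) * b)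
        - θ * z ^ s * r ^ s * v ^ (-θ - 1) * G ^ 2)) := by
  have hz1 : z ^ (s - 1) = z ^ (s - 2) * z := by
    rw [← rpow_add_one' hz (by linarith)]; ring_nf
  have hz2 : z ^ s = z ^ (s - 2) * z ^ 2 := by
    rw [← rpow_add_natCast' hz (by push_cast; linarith)]; norm_num
  have hr2 : r ^ s = r ^ (s - 2) * r ^ 2 := by
    rw [← rpow_add_natCast' hr (by push_cast; linarith)]; norm_num
  have hv0 : v ^ (m - θ) = v ^ (m - θ - 2) * v ^ 2 := by
    rw [← rpow_add_natCast hv.ne']; norm_num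
  have hv1 : v ^ (m - 1) * v ^ (-θ) = v ^ (m - θ - 2) * v := by
    rw [← rpow_add hv, ← rpow_add_one hv.ne']; ring_nf
  have hv2 : v ^ (m - 1) * v ^ (-θ - 1) = v ^ (m - θ - 2) := by
    rw [← rpow_add hv]; ring_nf
  have hc : 0 ≤ m * (z ^ (s - 2) * r ^ (s - 2) * v ^ (m - θ - 2)) := by positivity
  have core := mul_le_mul_of_nonneg_left
    (young_bound_polynomial hθ (by linarith : 0 ≤ s) hz hv.le ha hb) hc
  rw [hz1, hz2, hr2, hv0]
  calc _ = -(m * (z ^ (s - 2) * r ^ (s - 2) * v ^ (m - θ - 2))) * (s ^ 2 / (2 * θ) * v ^ 2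
          * (r ^ 2 * g ^ 2 + z ^ 2)) := by ring
    _ ≤ -(m * (z ^ (s - 2) * r ^ (s - 2) * v ^ (m - θ - 2))
          * (s * v * (z * r ^ 2 * a + z ^ 2 * b) - θ * z ^ 2 * r ^ 2 * G ^ 2)) := by
      linear_combination core
    _ = _ := by
      linear_combination (m * s * (z ^ (s - 2) * z * (r ^ (s - 2) * r ^ 2) * a
        + z ^ (s - 2) * z ^ 2 * r ^ (s - 2) * b)) * hv1
        - (m * θ * (z ^ (s - 2) * z ^ 2) * (r ^ (s - 2) * r ^ 2) * G ^ 2) * hv2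

section Gradient

variable {N : ℕ} {f g : EuclideanSpace ℝ (Fin N) → ℝ} {x : EuclideanSpace ℝ (Fin N)}

theorem gradient_fun_mul (hf : DifferentiableAt ℝ f x) (hg : DifferentiableAt ℝ g x) :
    gradient (fun y => f y * g y) x = f x • gradient g x + g x • gradient f x := by
  rw [gradient, fderiv_fun_mul hf hg]
  simp [gradient]

theorem gradient_rpow_const {p : ℝ} (hf : DifferentiableAt ℝ f x) (h : f x ≠ 0 ∨ 1 ≤ p) :
    gradient (fun y => f y ^ p) x = (p * f x ^ (p - 1)) • gradient f x := by
  simp [gradient, (hf.hasFDerivAt.rpow_const h).fderiv]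

theorem gradient_norm_rpow {p : ℝ} (hp : 1 < p) :
    gradient (fun y : EuclideanSpace ℝ (Fin N) => ‖y‖ ^ p) x = (p * ‖x‖ ^ (p - 2)) • x := by
  have : (InnerProductSpace.toDual ℝ _).symm (innerSL ℝ x) = x :=
    (InnerProductSpace.toDual ℝ (EuclideanSpace ℝ (Fin N))).symm_apply_apply x
  simp [gradient, (hasFDerivAt_norm_rpow x hp).fderiv, this]

theorem inner_gradient_eq_sum_fderiv_single :
    ⟪gradient f x, gradient g x⟫ =
      ∑ i, fderiv ℝ f x (EuclideanSpace.single i 1) * fderiv ℝ g x (EuclideanSpace.single i 1) := by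
  simp only [← inner_gradient_left, PiLp.inner_apply]
  simp [mul_comm]

theorem HasCompactSupport.gradient (hf : HasCompactSupport f) : HasCompactSupport (gradient f) :=
  (hf.fderiv (𝕜 := ℝ)).comp_left (map_zero _)

theorem ContDiff.continuous_gradient (hf : ContDiff ℝ 1 f) : Continuous (gradient f) :=
  (InnerProductSpace.toDual ℝ _).symm.continuous.comp (hf.continuous_fderiv one_ne_zero)

theorem inner_gradient_weight_gradient_rpow {ζ u : EuclideanSpace ℝ (Fin N) → ℝ} {s θ m : ℝ}
    (hζ : DifferentiableAt ℝ ζ x) (hu : DifferentiableAt ℝ u x) (hux : 0 < u x) (hs : 1 < s) :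
    ⟪gradient (fun y => ζ y ^ s * ‖y‖ ^ s * u y ^ (-θ)) x, gradient (fun y => u y ^ m) x⟫ =
      m * u x ^ (m - 1) * (u x ^ (-θ) * (s * ζ x ^ (s - 1) * ‖x‖ ^ s * ⟪gradient ζ x, gradient u x⟫
        + s * ζ x ^ s * ‖x‖ ^ (s - 2) * ⟪x, gradient u x⟫)
        - θ * ζ x ^ s * ‖x‖ ^ s * u x ^ (-θ - 1) * ‖gradient u x‖ ^ 2) := by
  have hζs : DifferentiableAt ℝ (fun y => ζ y ^ s) x := hζ.rpow_const (Or.inr hs.le)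
  have hnorm := (hasFDerivAt_norm_rpow x hs).differentiableAt
  rw [gradient_fun_mul (hζs.fun_mul hnorm) (hu.rpow_const (Or.inl hux.ne')),
    gradient_fun_mul hζs hnorm,
    gradient_rpow_const hu (Or.inl hux.ne'), gradient_rpow_const hu (Or.inl hux.ne'),
    gradient_rpow_const hζ (Or.inr hs.le), gradient_norm_rpow hs]
  simp only [inner_add_left, inner_smul_left, inner_smul_right, real_inner_self_eq_norm_sq,
    conj_trivial]
  ring

end Gradient

section CompactSupport

variable {N : ℕ} {W V : EuclideanSpace ℝ (Fin N) → ℝ}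

theorem integrable_fderiv_apply_mul (hW : ContDiff ℝ 1 W) (hWc : HasCompactSupport W)
    (hV : Continuous V) (v : EuclideanSpace ℝ (Fin N)) :
    Integrable fun x => fderiv ℝ W x v * V x :=
  (((hW.continuous_fderiv one_ne_zero).clm_apply continuous_const).mul
    hV).integrable_of_hasCompactSupport (hWc.fderiv_apply (𝕜 := ℝ) v).mul_right

theorem integrable_inner_gradient (hW : ContDiff ℝ 1 W) (hWc : HasCompactSupport W)
    (hV : ContDiff ℝ 1 V) : Integrable fun x => ⟪gradient W x, gradient V x⟫ := by
  simp_rw [inner_gradient_eq_sum_fderiv_single]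
  exact integrable_finsetSum _ fun i _ => integrable_fderiv_apply_mul hW hWc
    ((hV.continuous_fderiv one_ne_zero).clm_apply continuous_const) _

theorem integral_mul_laplacian_eq_neg_integral_inner_gradient (hW : ContDiff ℝ 1 W)
    (hWc : HasCompactSupport W) (hV : ContDiff ℝ 2 V) :
    ∫ x, W x * laplacian V x = -∫ x, ⟪gradient W x, gradient V x⟫ := by
  have hV' (i : Fin N) : ContDiff ℝ 1 fun y => fderiv ℝ V y (EuclideanSpace.single i 1) :=
    (hV.fderiv_right (m := 1) le_rfl).clm_apply contDiff_const
  have hint_left (i : Fin N) : Integrable fun x =>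
      W x * fderiv ℝ (fun y => fderiv ℝ V y (EuclideanSpace.single i 1)) x
        (EuclideanSpace.single i 1) :=
    (hW.continuous.mul (((hV' i).continuous_fderiv one_ne_zero).clm_apply
      continuous_const)).integrable_of_hasCompactSupport hWc.mul_right
  have hint_right (i : Fin N) : Integrable fun x =>
      fderiv ℝ W x (EuclideanSpace.single i 1) * fderiv ℝ V x (EuclideanSpace.single i 1) :=
    integrable_fderiv_apply_mul hW hWc (hV' i).continuous _
  simp_rw [laplacian, Finset.mul_sum, inner_gradient_eq_sum_fderiv_single]
  rw [integral_finsetSum _ fun i _ => hint_left i, integral_finsetSum _ fun i _ => hint_right i,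
    ← Finset.sum_neg_distrib]
  refine Finset.sum_congr rfl fun i _ => ?_
  exact integral_mul_fderiv_eq_neg_fderiv_mul_of_integrable (hint_right i) (hint_left i)
    ((hW.continuous.mul (hV' i).continuous).integrable_of_hasCompactSupport hWc.mul_right)
    (fun x _ => hW.differentiable one_ne_zero x) (fun x _ => (hV' i).differentiable one_ne_zero x)

theorem continuous_rpow_mul_norm_rpow_mul_rpow {ζ u : EuclideanSpace ℝ (Fin N) → ℝ} {p q r : ℝ}
    (hζ : Continuous ζ) (hu : Continuous u) (hupos : ∀ x, 0 < u x) (hp : 0 ≤ p) (hq : 0 ≤ q) :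
    Continuous fun x => ζ x ^ p * ‖x‖ ^ q * u x ^ r :=
  ((hζ.rpow_const fun _ => Or.inr hp).mul (continuous_norm.rpow_const fun _ => Or.inr hq)).mul
    (hu.rpow_const fun x => Or.inl (hupos x).ne')

end CompactSupport

theorem diffusion_term_lower_bound_general
    (N : ℕ) (m θ s : ℝ) (hm : 0 < m)
    (hθ : θ ∈ Set.Ioo (0 : ℝ) (min 1 m)) (hs : 2 ≤ s)
    (u : EuclideanSpace ℝ (Fin N) → ℝ)
    (hu : ContDiff ℝ 2 u) (hupos : ∀ x, 0 < u x)
    (ζ : EuclideanSpace ℝ (Fin N) → ℝ)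
    (hζ : ContDiff ℝ 1 ζ) (hζsupp : HasCompactSupport ζ) (hζ0 : ∀ x, 0 ≤ ζ x) :
    -(m * s ^ 2 / (2 * θ)) *
        ((∫ x, ζ x ^ (s - 2) * ‖x‖ ^ s * u x ^ (m - θ) * ‖gradient ζ x‖ ^ 2) +
          ∫ x, ζ x ^ s * ‖x‖ ^ (s - 2) * u x ^ (m - θ)) ≤
      ∫ x, ζ x ^ s * ‖x‖ ^ s * u x ^ (-θ) * laplacian (fun y => u y ^ m) x := by
  have hu1 : ContDiff ℝ 1 u := hu.of_le one_le_two
  have hV : ContDiff ℝ 2 fun y => u y ^ m := hu.rpow_const_of_ne fun x => (hupos x).ne'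
  have hW : ContDiff ℝ 1 fun y => ζ y ^ s * ‖y‖ ^ s * u y ^ (-θ) :=
    ((hζ.rpow_const_of_le (m := 1) (by norm_num; linarith)).mul
      (contDiff_norm_rpow (by linarith))).mul (hu1.rpow_const_of_ne fun x => (hupos x).ne')
  have hζs : HasCompactSupport fun y => ζ y ^ s :=
    hζsupp.comp_left (g := (· ^ s)) (zero_rpow (by linarith))
  have hWc : HasCompactSupport fun y => ζ y ^ s * ‖y‖ ^ s * u y ^ (-θ) := hζs.mul_right.mul_right
  have hgrad : HasCompactSupport fun x => ‖gradient ζ x‖ ^ 2 :=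
    hζsupp.gradient.comp_left (g := fun v => ‖v‖ ^ 2) (by simp)
  have hA : Integrable fun x => ζ x ^ (s - 2) * ‖x‖ ^ s * u x ^ (m - θ) * ‖gradient ζ x‖ ^ 2 :=
    ((continuous_rpow_mul_norm_rpow_mul_rpow hζ.continuous hu.continuous hupos (by linarith)
      (by linarith)).mul (hζ.continuous_gradient.norm.pow 2)).integrable_of_hasCompactSupport
      hgrad.mul_left
  have hB : Integrable fun x => ζ x ^ s * ‖x‖ ^ (s - 2) * u x ^ (m - θ) :=
    (continuous_rpow_mul_norm_rpow_mul_rpow hζ.continuous hu.continuous hupos (by linarith)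
      (by linarith)).integrable_of_hasCompactSupport hζs.mul_right.mul_right
  rw [integral_mul_laplacian_eq_neg_integral_inner_gradient hW hWc hV, ← integral_add hA hB,
    ← integral_const_mul, ← integral_neg]
  refine integral_mono ((hA.add hB).const_mul _)
    (integrable_inner_gradient hW hWc (hV.of_le one_le_two)).neg fun x => ?_
  rw [inner_gradient_weight_gradient_rpow ((hζ.differentiable one_ne_zero) x)
    ((hu1.differentiable one_ne_zero) x) (hupos x) (by linarith)]
  exact young_bound_rpow hm hθ.1 hs (hζ0 x) (norm_nonneg x) (hupos x) (real_inner_le_norm _ _)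
    (real_inner_le_norm _ _)

/-- Lower bound for the diffusion term tested against `ζ^s |x|^s u^{-θ}`:
`∫ ζ^s |x|^s u^{-θ} Δ(u^m)
  ≥ -(m s²/2θ) [∫ ζ^{s-2} |x|^s u^{m-θ} |∇ζ|² + ∫ ζ^s |x|^{s-2} u^{m-θ}]`. -/
theorem diffusion_term_lower_bound
    (N : ℕ) (hN : 1 ≤ N) (m θ s : ℝ) (hm : 0 < m)
    (hθ : θ ∈ Set.Ioo (0 : ℝ) (min 1 m)) (hs : 2 ≤ s)
    (u : EuclideanSpace ℝ (Fin N) → ℝ)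
    (hu : ContDiff ℝ 2 u) (hupos : ∀ x, 0 < u x)
    (ζ : EuclideanSpace ℝ (Fin N) → ℝ)
    (hζ : ContDiff ℝ 1 ζ) (hζsupp : HasCompactSupport ζ) (hζ0 : ∀ x, 0 ≤ ζ x) :
    -(m * s ^ 2 / (2 * θ)) *
        ((∫ x, ζ x ^ (s - 2) * ‖x‖ ^ s * u x ^ (m - θ) * ‖gradient ζ x‖ ^ 2) +
          ∫ x, ζ x ^ s * ‖x‖ ^ (s - 2) * u x ^ (m - θ)) ≤
      ∫ x, ζ x ^ s * ‖x‖ ^ s * u x ^ (-θ) * laplacian (fun y => u y ^ m) x :=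
  diffusion_term_lower_bound_general N m θ s hm hθ hs u hu hupos ζ hζ hζsupp hζ0
end
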